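/- arXiv:2407.16561 — 6 statements merged into one kernel-verified Lean document; each statement's English description precedes it below -/
import Mathlib

section
/- For natural numbers n ≥ 1, k, m with m ≤ n - 1, the generalized binomial coefficient satisfies the addition recursion C(n, k, m) = C(n-1, k, m) + C(n-1, k-1, m), where C(n-1, k-1, m) is interpreted as 0 when k = 0. -/
open Finset

/-- Generalized binomial (Kravchuk) coefficient:
`C(n,k,m) = Σ_{l=0}^{m} (-1)^l * binom(n-m, k-l) * binom(m, l)`,
with the convention that the binomial vanishes for a negative lower index
(encoded by the `if l ≤ k` guard, since we use natural subtraction). -/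
def kravC (n k m : ℕ) : ℤ :=
  ∑ l ∈ Finset.range (m + 1),
    (-1 : ℤ) ^ l * (if l ≤ k then ((n - m).choose (k - l) : ℤ) else 0) * (m.choose l : ℤ)

/-!
`C(n, k, m)` is the coefficient of `X^k` in the generating function `(1 - X)^m (1 + X)^(n - m)`.
Lowering `n` by one removes a factor `1 + X`, and multiplying by `1 + X` is Pascal's rule
on coefficients.
-/

open Polynomial

theorem Polynomial.coeff_mul_one_add_X {R : Type*} [Semiring R] (p : R[X]) (k : ℕ) :
    (p * (1 + X)).coeff k = p.coeff k + if k = 0 then 0 else p.coeff (k - 1) := by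
  rw [mul_add, mul_one, coeff_add]
  cases k with
  | zero => rw [coeff_mul_X_zero, if_pos rfl]
  | succ k => rw [coeff_mul_X, if_neg k.succ_ne_zero, Nat.add_sub_cancel]

theorem Polynomial.one_sub_X_pow_eq_sum {R : Type*} [CommRing R] (m : ℕ) :
    ((1 - X) ^ m : R[X]) = ∑ l ∈ range (m + 1), C ((-1) ^ l * (m.choose l : R)) * X ^ l := by
  rw [sub_eq_neg_add, add_pow]
  refine sum_congr rfl fun l _ => ?_
  rw [one_pow, mul_one, neg_pow, C_mul, C_pow, C_neg, C_1, ← Polynomial.C_eq_natCast]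
  ring

theorem kravC_eq_coeff (n k m : ℕ) :
    kravC n k m = ((1 - X) ^ m * (1 + X) ^ (n - m) : ℤ[X]).coeff k := by
  rw [one_sub_X_pow_eq_sum, sum_mul, finsetSum_coeff, kravC]
  refine sum_congr rfl fun l _ => ?_
  rw [mul_assoc (C _), coeff_C_mul, coeff_X_pow_mul', coeff_one_add_X_pow]
  ring

theorem kravC_add_recursion (n k m : ℕ) (hn : 1 ≤ n) (hm : m ≤ n - 1) :
    kravC n k m = kravC (n - 1) k m + (if k = 0 then 0 else kravC (n - 1) (k - 1) m) := by
  have hnm : n - m = n - 1 - m + 1 := by omega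
  simp only [kravC_eq_coeff, hnm, pow_succ, ← mul_assoc, coeff_mul_one_add_X]
end

section
/- For all natural numbers n ≥ 1 and m ≤ n, the sum Σ_{k=0}^{n} k * C(n, k, m) equals n * 2^(n-1) if m = 0, equals -2^(n-1) if m = 1, and equals 0 if 2 ≤ m ≤ n. -/
/-!
Exchanging the sums and substituting `k = l + j` turns the left-hand side into
`Σ_l (-1)^l C(m, l) ((n-m) 2^(n-m-1) + l 2^(n-m))`. The alternating sums
`Σ_l (-1)^l C(m, l)` and `Σ_l (-1)^l C(m, l) l` vanish unless `m = 0`, respectively `m = 1`.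
-/

open Finset

theorem Int.alternating_sum_range_choose_mul (m : ℕ) :
    ∑ l ∈ Finset.range (m + 1), (-1 : ℤ) ^ l * m.choose l * l = if m = 1 then -1 else 0 := by
  cases m with
  | zero => simp
  | succ M =>
    have hterm (j : ℕ) : (-1 : ℤ) ^ (j + 1) * (M + 1).choose (j + 1) * ((j + 1 : ℕ) : ℤ) =
        -(M + 1) * ((-1) ^ j * M.choose j) := by
      have := congrArg (Nat.cast : ℕ → ℤ) (Nat.add_one_mul_choose_eq M j)
      push_cast at this ⊢
      linear_combination (-(-1 : ℤ) ^ j) * this.symm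
    rw [sum_range_succ']
    simp only [hterm, ← mul_sum, Int.alternating_sum_range_choose]
    split_ifs <;> simp_all

theorem sum_range_mul_shifted_choose {a l N : ℕ} (h : a + l ≤ N) :
    ∑ k ∈ range (N + 1), (k : ℤ) * (if l ≤ k then (a.choose (k - l) : ℤ) else 0) =
      a * 2 ^ (a - 1) + l * 2 ^ a := by
  rw [show N + 1 = l + (N + 1 - l) by omega, sum_range_add,
    sum_eq_zero fun k hk => by simp [(mem_range.mp hk).not_ge], zero_add]
  simp only [le_add_iff_nonneg_right, zero_le, if_true, add_tsub_cancel_left]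
  rw [← sum_subset (range_subset_range.mpr (by omega : a + 1 ≤ N + 1 - l))
    fun j _ hj => by rw [Nat.choose_eq_zero_of_lt (by simpa using hj)]; simp]
  have hsum : ∑ j ∈ range (a + 1), (a.choose j : ℤ) = 2 ^ a := by
    exact_mod_cast Nat.sum_range_choose a
  have hmul : ∑ j ∈ range (a + 1), (j : ℤ) * a.choose j = a * 2 ^ (a - 1) := by
    exact_mod_cast Nat.sum_range_mul_choose a
  simp only [Nat.cast_add, add_mul, sum_add_distrib, ← mul_sum, hsum, hmul]
  ring

theorem kravC_sum_with_number_operator_general (n m : ℕ) (hm : m ≤ n) :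
    (∑ k ∈ Finset.range (n + 1), (k : ℤ) * kravC n k m) =
      if m = 0 then (n : ℤ) * 2 ^ (n - 1)
      else if m = 1 then -(2 : ℤ) ^ (n - 1)
      else 0 := by
  set a := n - m with ha
  calc ∑ k ∈ range (n + 1), (k : ℤ) * kravC n k m
      = ∑ l ∈ range (m + 1), (-1 : ℤ) ^ l * m.choose l * (a * 2 ^ (a - 1) + l * 2 ^ a) := by
        simp only [kravC, mul_sum]
        rw [sum_comm]
        refine sum_congr rfl fun l hl => ?_
        rw [← sum_range_mul_shifted_choose (N := n) (by have := mem_range.mp hl; omega), mul_sum]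
        exact sum_congr rfl fun k _ => by ring
    _ = a * 2 ^ (a - 1) * ∑ l ∈ range (m + 1), (-1 : ℤ) ^ l * m.choose l
          + 2 ^ a * ∑ l ∈ range (m + 1), (-1 : ℤ) ^ l * m.choose l * l := by
        simp only [mul_sum, ← sum_add_distrib]
        exact sum_congr rfl fun l _ => by ring
    _ = _ := by
        rw [Int.alternating_sum_range_choose, Int.alternating_sum_range_choose_mul]
        rcases m with _ | _ | m
        · simp [ha]
        · simp [ha]
        · simp

theorem kravC_sum_with_number_operator (n m : ℕ) (hn : 1 ≤ n) (hm : m ≤ n) :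
    (∑ k ∈ Finset.range (n + 1), (k : ℤ) * kravC n k m) =
      if m = 0 then (n : ℤ) * 2 ^ (n - 1)
      else if m = 1 then -(2 : ℤ) ^ (n - 1)
      else 0 :=
  kravC_sum_with_number_operator_general n m hm
end

section
/- For every function f : Fin n → Bool (a computational basis string), the evaluation Σ_{S ⊆ Fin n} C(n, k, |S|) * Π_{i ∈ S} (-1)^(if f i then 1 else 0) equals 2^n if the Hamming weight of f equals k, and equals 0 otherwise. -/
/-!
Grouping the `k`-sets `T` according to `A = T ∩ S` (each `A ⊆ S` with `#A ≤ k` arises from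
`choose (n - #S) (k - #A)` of them) shows that the Kravchuk coefficient is a character sum,
`kravC n k #S = ∑_{#T = k} (-1) ^ #(S ∩ T)`. Substituting it and exchanging the sums, the
orthogonality of the characters `S ↦ (-1) ^ #(S ∩ T)` of `(ℤ/2)ⁿ` keeps only the term
`T = {i | f i}`, which is present exactly when the Hamming weight of `f` is `k`.
-/

open Finset

section

variable {α : Type*} [DecidableEq α]

theorem prod_ite_mem_neg_one {R : Type*} [CommMonoid R] [HasDistribNeg R] (S T : Finset α) :
    ∏ i ∈ S, (if i ∈ T then (-1 : R) else 1) = (-1) ^ #(S ∩ T) := by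
  rw [prod_ite_mem, prod_const]

variable [Fintype α]

theorem card_filter_powersetCard_inter_eq {S A : Finset α} (hA : A ⊆ S) (k : ℕ) :
    #{T ∈ powersetCard k (univ : Finset α) | T ∩ S = A} =
      if #A ≤ k then (Fintype.card α - #S).choose (k - #A) else 0 := by
  split_ifs with hk
  · rw [← card_compl, ← card_powersetCard]
    refine card_bij' (fun T _ => T \ S) (fun B _ => A ∪ B) ?_ ?_ ?_ ?_
    · intro T hT
      rw [mem_filter, mem_powersetCard_univ] at hT
      obtain ⟨rfl, rfl⟩ := hT
      rw [mem_powersetCard, ← card_inter_add_card_sdiff T S, Nat.add_sub_cancel_left]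
      exact ⟨fun x hx => mem_compl.mpr (mem_sdiff.mp hx).2, rfl⟩
    · intro B hB
      rw [mem_powersetCard, subset_compl_iff_disjoint_right] at hB
      have hAB : Disjoint A B := disjoint_of_subset_left hA hB.1.symm
      rw [mem_filter, mem_powersetCard_univ, card_union_of_disjoint hAB, hB.2,
        union_inter_distrib_right, inter_eq_left.mpr hA, disjoint_iff_inter_eq_empty.mp hB.1,
        union_empty]
      exact ⟨by omega, rfl⟩
    · intro T hT
      rw [mem_filter] at hT
      rw [← hT.2]
      exact sup_inf_sdiff T S
    · intro B hB
      rw [mem_powersetCard, subset_compl_iff_disjoint_right] at hB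
      rw [union_sdiff_distrib, sdiff_eq_empty_iff_subset.mpr hA, empty_union,
        sdiff_eq_self_of_disjoint hB.1]
  · refine card_eq_zero.mpr (filter_eq_empty_iff.mpr fun T hT hTA => hk ?_)
    rw [← hTA, ← (mem_powersetCard_univ.mp hT)]
    exact card_le_card inter_subset_left

theorem kravC_card_eq_sum_powersetCard (S : Finset α) (k : ℕ) :
    kravC (Fintype.card α) k #S = ∑ T ∈ powersetCard k univ, (-1 : ℤ) ^ #(S ∩ T) := by
  rw [← sum_fiberwise_of_maps_to (g := (· ∩ S)) (t := S.powerset)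
      (fun T _ => mem_powerset.mpr inter_subset_right), sum_powerset, kravC]
  refine sum_congr rfl fun l _ => ?_
  have hfiber : ∀ A ∈ powersetCard l S,
      ∑ T ∈ powersetCard k univ with T ∩ S = A, (-1 : ℤ) ^ #(S ∩ T) =
        (-1) ^ l * (if l ≤ k then ((Fintype.card α - #S).choose (k - l) : ℤ) else 0) := by
    intro A hA
    rw [mem_powersetCard] at hA
    rw [sum_congr rfl fun T hT => by rw [inter_comm, (mem_filter.mp hT).2, hA.2], sum_const,
      card_filter_powersetCard_inter_eq hA.1, hA.2, nsmul_eq_mul,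
      Nat.cast_ite, Nat.cast_zero, mul_comm]
  rw [sum_congr rfl hfiber, sum_const, card_powersetCard, nsmul_eq_mul]
  ring

theorem sum_neg_one_pow_card_inter_mul {R : Type*} [CommRing R] (T F : Finset α) :
    ∑ S : Finset α, (-1 : R) ^ #(S ∩ T) * (-1) ^ #(S ∩ F) =
      if T = F then 2 ^ Fintype.card α else 0 := by
  have hfactor : ∀ i : α, 1 + (if i ∈ T then (-1 : R) else 1) * (if i ∈ F then -1 else 1) =
      if (i ∈ T ↔ i ∈ F) then 2 else 0 := by
    intro i
    by_cases hT : i ∈ T <;> by_cases hF : i ∈ F <;> norm_num [hT, hF]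
  -- `∑ S, ∏ i ∈ S, g i = ∏ i, (1 + g i)`, and a factor vanishes wherever `T` and `F` differ.
  simp_rw [← prod_ite_mem_neg_one, ← prod_mul_distrib]
  rw [← powerset_univ, ← prod_one_add]
  simp_rw [hfactor, prod_ite_zero, prod_const, card_univ, mem_univ, true_implies, ← Finset.ext_iff]

end

theorem kravC_pauli_decomposition_eval (n k : ℕ) (f : Fin n → Bool) :
    (∑ S : Finset (Fin n),
        kravC n k S.card * ∏ i ∈ S, (-1 : ℤ) ^ (if f i then 1 else 0)) =
      if (Finset.univ.filter fun i => f i = true).card = k then (2 : ℤ) ^ n else 0 := by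
  set F : Finset (Fin n) := univ.filter fun i => f i = true
  have hsign (S : Finset (Fin n)) :
      ∏ i ∈ S, (-1 : ℤ) ^ (if f i then 1 else 0) = (-1) ^ #(S ∩ F) := by
    rw [← prod_ite_mem_neg_one]
    refine prod_congr rfl fun i _ => ?_
    by_cases h : f i <;> simp [F, h]
  calc _ = ∑ S : Finset (Fin n), ∑ T ∈ powersetCard k univ,
        (-1 : ℤ) ^ #(S ∩ T) * (-1) ^ #(S ∩ F) := by
        refine sum_congr rfl fun S _ => ?_
        rw [hsign, ← sum_mul, ← kravC_card_eq_sum_powersetCard, Fintype.card_fin]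
    _ = ∑ T ∈ powersetCard k univ, if T = F then 2 ^ n else 0 := by
        rw [sum_comm]
        simp_rw [sum_neg_one_pow_card_inter_mul, Fintype.card_fin]
    _ = _ := by simp_rw [sum_ite_eq', mem_powersetCard_univ]
end

section
/- For all natural numbers n, k ≤ n, and m ≤ n, the symmetry relation C(n, n - k, m) = (-1)^m * C(n, k, m) holds. -/
/-!
Reflect the summation index `l ↦ m - l`. The sign `(-1)^(m-l)` becomes `(-1)^m (-1)^l`,
`binom(m, m-l) = binom(m, l)`, and `binom(n-m, n-k-(m-l)) = binom(n-m, k-l)` by the symmetry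
of binomial coefficients, since `(n-k-(m-l)) + (k-l) = n-m`; read with integer lower indices,
both guarded binomials vanish outside `[0, n-m]`.
-/

open Finset

theorem neg_one_pow_sub_eq_mul {R : Type*} [Monoid R] [HasDistribNeg R] {l m : ℕ} (h : l ≤ m) :
    (-1 : R) ^ (m - l) = (-1) ^ m * (-1) ^ l := by
  obtain ⟨j, rfl⟩ := Nat.exists_eq_add_of_le h
  rw [Nat.add_sub_cancel_left, add_comm, pow_add, mul_assoc, ← pow_add, ← two_mul, pow_mul,
    neg_one_sq, one_pow, mul_one]

theorem guarded_choose_reflect {n k m l : ℕ} (hk : k ≤ n) (hm : m ≤ n) (hl : l ≤ m) :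
    (if m - l ≤ n - k then ((n - m).choose (n - k - (m - l)) : ℤ) else 0)
      = if l ≤ k then ((n - m).choose (k - l) : ℤ) else 0 := by
  split_ifs with h₁ h₂ h₂
  · exact congrArg _ (Nat.choose_symm_of_eq_add (by omega))
  · rw [Nat.choose_eq_zero_of_lt (by omega), Nat.cast_zero]
  · rw [Nat.choose_eq_zero_of_lt (by omega), Nat.cast_zero]
  · rfl

theorem kravC_symmetry (n k m : ℕ) (hk : k ≤ n) (hm : m ≤ n) :
    kravC n (n - k) m = (-1 : ℤ) ^ m * kravC n k m := by
  unfold kravC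
  rw [mul_sum, ← sum_range_reflect]
  refine sum_congr rfl fun l hl => ?_
  have hlm : l ≤ m := Nat.lt_succ_iff.mp (mem_range.mp hl)
  rw [Nat.add_sub_cancel, guarded_choose_reflect hk hm hlm, Nat.choose_symm hlm,
    neg_one_pow_sub_eq_mul hlm]
  ring
end

section
/- For all natural numbers n, k ≤ n, and m ≤ n, the reflection relation C(n, k, n - m) = (-1)^k * C(n, k, m) holds. -/
/-!
`kravC n k m` is the coefficient of `X ^ k` in `(1 - X) ^ m * (1 + X) ^ (n - m)`. Substituting
`-X` for `X` multiplies the `k`-th coefficient by `(-1) ^ k` and turns this polynomial into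
`(1 + X) ^ m * (1 - X) ^ (n - m)`, the generating polynomial of `kravC n k (n - m)`.
-/

open Finset

namespace Polynomial

variable {R : Type*} [CommRing R]

theorem coeff_comp_neg_X (p : R[X]) (n : ℕ) :
    (p.comp (-X)).coeff n = (-1) ^ n * p.coeff n := by
  rw [← neg_one_mul (X : R[X]), ← C_1, ← C_neg, comp_C_mul_X_coeff, mul_comm]

theorem coeff_one_sub_X_pow_mul_one_add_X_pow (a b k : ℕ) :
    ((1 - X) ^ b * (1 + X) ^ a : R[X]).coeff k =
      ∑ l ∈ range (b + 1),
        (-1) ^ l * (if l ≤ k then (a.choose (k - l) : R) else 0) * b.choose l := by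
  rw [sub_eq_neg_add, add_pow, sum_mul, finsetSum_coeff]
  refine sum_congr rfl fun l _ => ?_
  have hterm : (-X) ^ l * 1 ^ (b - l) * (b.choose l : R[X]) * (1 + X) ^ a =
      C ((-1) ^ l * b.choose l : R) * (X ^ l * (1 + X) ^ a) := by
    simp only [map_mul, map_pow, map_neg, map_one, map_natCast, neg_pow (X : R[X]), one_pow]
    ring
  rw [hterm, coeff_C_mul, coeff_X_pow_mul', coeff_one_add_X_pow]
  split_ifs <;> ring

end Polynomial

open Polynomial

theorem kravC_reflection_general (n k m : ℕ) (hm : m ≤ n) :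
    kravC n k (n - m) = (-1 : ℤ) ^ k * kravC n k m := by
  have hswap : ((1 - X) ^ m * (1 + X) ^ (n - m) : ℤ[X]).comp (-X) =
      (1 - X) ^ (n - m) * (1 + X) ^ m := by
    simp only [mul_comp, pow_comp, sub_comp, add_comp, one_comp, X_comp]
    ring
  rw [kravC_eq_coeff, kravC_eq_coeff, Nat.sub_sub_self hm, ← coeff_comp_neg_X, hswap]

theorem kravC_reflection (n k m : ℕ) (hk : k ≤ n) (hm : m ≤ n) :
    kravC n k (n - m) = (-1 : ℤ) ^ k * kravC n k m :=
  kravC_reflection_general n k m hm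
end

section
/- For all natural numbers n, k ≤ n, and m ≤ n, the duality relation binom(n, m) * C(n, k, m) = binom(n, k) * C(n, m, k) holds. -/
/-!
Both sides are compared term by term in `l`: `binom(n, m) * binom(m, l) * binom(n - m, k - l)`
counts the pairs of subsets `M, K` of an `n`-set with `|M| = m`, `|K| = k`, `|M ∩ K| = l`, so it is
symmetric in `m` and `k`.
-/

open Finset

theorem Nat.choose_mul_choose_sub_comm (n a b : ℕ) :
    n.choose a * (n - a).choose b = n.choose b * (n - b).choose a := by
  have ha := Nat.choose_mul (n := n) (Nat.le_add_right a b)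
  have hb := Nat.choose_mul (n := n) (Nat.le_add_left b a)
  simp only [Nat.add_sub_cancel_left, Nat.add_sub_cancel] at ha hb
  rw [← ha, ← hb, Nat.choose_symm_add]

theorem Nat.choose_mul_choose_mul_choose_sub_comm {n k m l : ℕ} (hlk : l ≤ k) (hlm : l ≤ m) :
    n.choose m * m.choose l * (n - m).choose (k - l) =
      n.choose k * k.choose l * (n - k).choose (m - l) := by
  calc n.choose m * m.choose l * (n - m).choose (k - l)
      = n.choose l * ((n - l).choose (m - l) * (n - l - (m - l)).choose (k - l)) := by
        rw [Nat.choose_mul hlm, mul_assoc, show n - l - (m - l) = n - m by omega]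
    _ = n.choose l * ((n - l).choose (k - l) * (n - l - (k - l)).choose (m - l)) := by
        rw [Nat.choose_mul_choose_sub_comm]
    _ = n.choose k * k.choose l * (n - k).choose (m - l) := by
        rw [show n - l - (k - l) = n - k by omega, ← mul_assoc, ← Nat.choose_mul hlk]

theorem choose_mul_kravC_summand_comm (n k m l : ℕ) :
    (n.choose m : ℤ) *
        ((-1) ^ l * (if l ≤ k then ((n - m).choose (k - l) : ℤ) else 0) * m.choose l) =
      n.choose k *
        ((-1) ^ l * (if l ≤ m then ((n - k).choose (m - l) : ℤ) else 0) * k.choose l) := by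
  by_cases hlk : l ≤ k <;> by_cases hlm : l ≤ m
  · have key : (n.choose m * m.choose l * (n - m).choose (k - l) : ℤ) =
        n.choose k * k.choose l * (n - k).choose (m - l) := by
      exact_mod_cast Nat.choose_mul_choose_mul_choose_sub_comm hlk hlm
    simp only [if_pos hlk, if_pos hlm]
    linear_combination (-1 : ℤ) ^ l * key
  · simp [hlk, hlm, Nat.choose_eq_zero_of_lt (not_le.1 hlm)]
  · simp [hlk, hlm, Nat.choose_eq_zero_of_lt (not_le.1 hlk)]
  · simp [hlk, hlm]

theorem kravC_eq_sum_range {n k m N : ℕ} (hm : m ≤ N) :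
    kravC n k m = ∑ l ∈ range (N + 1),
      (-1 : ℤ) ^ l * (if l ≤ k then ((n - m).choose (k - l) : ℤ) else 0) * (m.choose l : ℤ) := by
  refine sum_subset (range_subset_range.2 (Nat.succ_le_succ hm)) fun l _ hl => ?_
  simp [Nat.choose_eq_zero_of_lt (by simpa using hl : m < l)]

theorem kravC_duality (n k m : ℕ) (hk : k ≤ n) (hm : m ≤ n) :
    (n.choose m : ℤ) * kravC n k m = (n.choose k : ℤ) * kravC n m k := by
  rw [kravC_eq_sum_range hm, kravC_eq_sum_range hk, mul_sum, mul_sum]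
  exact sum_congr rfl fun l _ => choose_mul_kravC_summand_comm n k m l
end
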